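/- arXiv:1605.02402 — 4 statements merged into one kernel-verified Lean document; each statement's English description precedes it below -/
import Mathlib

section
/- The profile defined by x̄_k = s_k + γ for every k, where γ = (n+1)⁻¹(φ⁻¹(a − δ) − l_N − l_Q), satisfies the simultaneous first-order conditions 2φ x̄_k + φ(Σ_{k'≠k}(x̄_{k'} − s_{k'}) + l_N + l_Q − 2 s_k) + δ − a = 0 for all k ∈ {1,…,n}. -/
open Finset

/-- The profile `x̄_k = s_k + γ`, with
`γ = (n+1)⁻¹ (φ⁻¹ (a − δ) − l_N − l_Q)`, satisfies the simultaneous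
first-order conditions
`2 φ x̄_k + φ(Σ_{k' ≠ k}(x̄_{k'} − s_{k'}) + l_N + l_Q − 2 s_k) + δ − a = 0`
for all users `k`. -/
theorem equilibriumProfile_satisfies_FOC (n : ℕ) (hn : 1 ≤ n) (s : Fin n → ℝ)
    (lN lQ φ δ a : ℝ) (hφ : 0 < φ) (hδ : 0 < δ) :
    ∀ k : Fin n,
      2 * φ * (s k + ((n : ℝ) + 1)⁻¹ * (φ⁻¹ * (a - δ) - lN - lQ))
        + (φ * ((∑ k' ∈ Finset.univ.erase k,
              ((s k' + ((n : ℝ) + 1)⁻¹ * (φ⁻¹ * (a - δ) - lN - lQ)) - s k'))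
            + lN + lQ - 2 * s k) + δ - a)
        = 0 := by
  intro k
  have hsum : (∑ k' ∈ Finset.univ.erase k,
      ((s k' + ((n : ℝ) + 1)⁻¹ * (φ⁻¹ * (a - δ) - lN - lQ)) - s k'))
      = ((n : ℝ) - 1) * (((n : ℝ) + 1)⁻¹ * (φ⁻¹ * (a - δ) - lN - lQ)) := by
    simp only [add_sub_cancel_left, Finset.sum_const, nsmul_eq_mul]
    rw [Finset.card_erase_of_mem (Finset.mem_univ k), Finset.card_univ, Fintype.card_fin]
    have : ((n - 1 : ℕ) : ℝ) = (n : ℝ) - 1 := by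
      have := Nat.cast_sub hn (R := ℝ); simpa using this
    rw [this]
  rw [hsum]
  have hn1 : ((n : ℝ) + 1) ≠ 0 := by positivity
  have hφ' : (φ : ℝ) ≠ 0 := ne_of_gt hφ
  field_simp
  ring
end

section
/- The simultaneous first-order conditions 2φ x_k + φ(Σ_{k'≠k}(x_{k'} − s_{k'}) + l_N + l_Q − 2 s_k) + δ − a = 0 for k ∈ {1,…,n} have exactly one solution x ∈ ℝⁿ, namely x_k = s_k + γ with γ = (n+1)⁻¹(φ⁻¹(a − δ) − l_N − l_Q). -/
open Finset

/-!
Substituting `y = x - s`, the `k`-th condition reads `φ (y_k + Σ_i y_i - c) = 0` with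
`c = φ⁻¹ (a - δ) - l_N - l_Q`. So all `y_k` equal `c - Σ_i y_i`, and summing over `k` gives
`(n + 1) y_k = c`.
-/

section

variable {ι K : Type*} [Fintype ι] [Field K]

theorem forall_add_sum_eq_iff [CharZero K] (y : ι → K) (c : K) :
    (∀ k, y k + ∑ i, y i = c) ↔ y = fun _ => ((Fintype.card ι : K) + 1)⁻¹ * c := by
  have hcard : (Fintype.card ι : K) + 1 ≠ 0 := Nat.cast_add_one_ne_zero _
  constructor
  · intro h
    set T := ∑ i, y i
    have hy : ∀ k, y k = c - T := fun k => eq_sub_of_add_eq (h k)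
    have hTc : T = Fintype.card ι * (c - T) := calc
      T = ∑ _k : ι, (c - T) := Finset.sum_congr rfl fun k _ => hy k
      _ = Fintype.card ι * (c - T) := by rw [sum_const, card_univ, nsmul_eq_mul]
    funext k
    rw [hy k, eq_inv_mul_iff_mul_eq₀ hcard]
    linear_combination -hTc
  · rintro rfl k
    simp only [sum_const, card_univ, nsmul_eq_mul]
    field_simp
    ring

theorem two_mul_add_sum_erase_sub [DecidableEq ι] (x s : ι → K) (lN lQ φ δ a : K)
    (hφ : φ ≠ 0) (k : ι) :
    2 * φ * x k + (φ * ((∑ i ∈ univ.erase k, (x i - s i)) + lN + lQ - 2 * s k) + δ - a)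
      = φ * ((x - s) k + ∑ i, (x - s) i - (φ⁻¹ * (a - δ) - lN - lQ)) := by
  rw [sum_erase_eq_sub (mem_univ k)]
  simp only [Pi.sub_apply]
  field_simp
  ring

end

theorem FOC_unique_solution_general (n : ℕ) (s : Fin n → ℝ)
    (lN lQ φ δ a : ℝ) (hφ : 0 < φ) :
    ∀ x : Fin n → ℝ,
      (∀ k : Fin n,
        2 * φ * x k
          + (φ * ((∑ k' ∈ Finset.univ.erase k, (x k' - s k')) + lN + lQ - 2 * s k) + δ - a)
          = 0)
      ↔ x = fun k => s k + ((n : ℝ) + 1)⁻¹ * (φ⁻¹ * (a - δ) - lN - lQ) := by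
  intro x
  simp only [two_mul_add_sum_erase_sub x s lN lQ φ δ a hφ.ne', mul_eq_zero, hφ.ne', false_or,
    sub_eq_zero]
  rw [forall_add_sum_eq_iff, Fintype.card_fin, funext_iff, funext_iff]
  simp only [Pi.sub_apply, sub_eq_iff_eq_add']

/-- The simultaneous first-order conditions
`2 φ x_k + φ(Σ_{k' ≠ k}(x_{k'} − s_{k'}) + l_N + l_Q − 2 s_k) + δ − a = 0`
for `k ∈ {1,…,n}` have exactly one solution `x ∈ ℝⁿ`, namely
`x_k = s_k + γ` with `γ = (n+1)⁻¹ (φ⁻¹ (a − δ) − l_N − l_Q)`. -/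
theorem FOC_unique_solution (n : ℕ) (hn : 1 ≤ n) (s : Fin n → ℝ)
    (lN lQ φ δ a : ℝ) (hφ : 0 < φ) (hδ : 0 < δ) :
    ∀ x : Fin n → ℝ,
      (∀ k : Fin n,
        2 * φ * x k
          + (φ * ((∑ k' ∈ Finset.univ.erase k, (x k' - s k')) + lN + lQ - 2 * s k) + δ - a)
          = 0)
      ↔ x = fun k => s k + ((n : ℝ) + 1)⁻¹ * (φ⁻¹ * (a - δ) - lN - lQ) :=
  FOC_unique_solution_general n s lN lQ φ δ a hφ
end

section
/- The profile x̄ with x̄_k = s_k + γ, where γ = (n+1)⁻¹(φ⁻¹(a − δ) − l_N − l_Q), is the unique Nash equilibrium of the per-slot game with unconstrained strategies: for every user k and every x ≠ x̄_k one has C_k(x̄_k, x̄₋ₖ) < C_k(x, x̄₋ₖ), and no other profile has this best-response property. -/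
open Finset

/-- Per-slot energy cost of user `k`: `C_k(x) = (φ L + δ)(x_k − s_k) − a x_k`,
where `L = Σ_{k'} (x_{k'} − s_{k'}) + l_N + l_Q`. -/
noncomputable def userCost (n : ℕ) (s : Fin n → ℝ) (lN lQ φ δ a : ℝ)
    (k : Fin n) (x : Fin n → ℝ) : ℝ :=
  (φ * ((∑ k', (x k' - s k')) + lN + lQ) + δ) * (x k - s k) - a * x k

/-- The candidate Nash equilibrium profile `x̄_k = s_k + γ`,
`γ = (n+1)⁻¹ (φ⁻¹ (a − δ) − l_N − l_Q)`. -/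
noncomputable def nashProfile (n : ℕ) (s : Fin n → ℝ) (lN lQ φ δ a : ℝ) :
    Fin n → ℝ :=
  fun k => s k + ((n : ℝ) + 1)⁻¹ * (φ⁻¹ * (a - δ) - lN - lQ)

/-!
Against a fixed profile, user `k`'s cost is a quadratic in its own deviation `u = x_k - s_k`
with leading coefficient `φ > 0`. A best response is therefore exactly the vertex, i.e. the
first-order condition `u_k + ∑ j, u_j = φ⁻¹ (a - δ) - l_N - l_Q`, and it is strict. This linear
system forces all deviations to be equal, and its unique solution is `u_k = γ`.
-/

theorem Finset.sum_update_sub {ι M : Type*} [Fintype ι] [DecidableEq ι] [AddCommGroup M]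
    (f g : ι → M) (i : ι) (b : M) :
    ∑ j, (Function.update f i b j - g j) = ∑ j, (f j - g j) - (f i - g i) + (b - g i) := by
  rw [← add_sum_erase _ _ (mem_univ i), ← add_sum_erase _ (fun j => f j - g j) (mem_univ i),
    sum_congr rfl fun j hj => by rw [Function.update_of_ne (ne_of_mem_erase hj)],
    Function.update_self]
  abel

theorem add_sum_eq_iff_eq_const {ι K : Type*} [Fintype ι] [Field K] [CharZero K]
    (d : ι → K) (c : K) :
    (∀ k, d k + ∑ j, d j = c) ↔ d = fun _ => ((Fintype.card ι : K) + 1)⁻¹ * c := by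
  have hcard : (Fintype.card ι : K) + 1 ≠ 0 := by exact_mod_cast (Fintype.card ι).succ_ne_zero
  constructor
  · intro h
    have hd : d = fun _ => c - ∑ j, d j := funext fun k => eq_sub_of_add_eq (h k)
    have hsum : ∑ j, d j = Fintype.card ι * (c - ∑ j, d j) := by
      conv_lhs => rw [hd]
      simp only [sum_const, card_univ, nsmul_eq_mul]
    funext k
    rw [hd, eq_inv_mul_iff_mul_eq₀ hcard]
    linear_combination -hsum
  · rintro rfl k
    simp only [sum_const, card_univ, nsmul_eq_mul]
    field_simp
    ring

theorem quadratic_lt_of_ne_vertex {a b u v : ℝ} (ha : 0 < a) (hu : 2 * a * u + b = 0)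
    (hv : v ≠ u) : a * u ^ 2 + b * u < a * v ^ 2 + b * v := by
  have hsq : 0 < (v - u) ^ 2 := sq_pos_of_ne_zero (sub_ne_zero.mpr hv)
  have hdiff : a * v ^ 2 + b * v - (a * u ^ 2 + b * u) = a * (v - u) ^ 2 := by
    linear_combination (v - u) * hu
  linarith [mul_pos ha hsq]

theorem quadratic_vertex_of_forall_le {a b u : ℝ}
    (h : ∀ v, a * u ^ 2 + b * u ≤ a * v ^ 2 + b * v) : 2 * a * u + b = 0 := by
  have hderiv : HasDerivAt (fun v => a * v ^ 2 + b * v) (2 * a * u + b) u := by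
    refine (((hasDerivAt_pow 2 u).const_mul a).fun_add
      ((hasDerivAt_id' u).const_mul b)).congr_deriv ?_
    norm_num
    ring
  exact IsLocalMin.hasDerivAt_eq_zero (Filter.Eventually.of_forall h) hderiv

section
variable {n : ℕ} {s : Fin n → ℝ} {lN lQ φ δ a : ℝ}

theorem userCost_update (k : Fin n) (y : Fin n → ℝ) (t : ℝ) :
    userCost n s lN lQ φ δ a k (Function.update y k t) =
      φ * (t - s k) ^ 2 +
        (φ * (∑ j, (y j - s j) - (y k - s k) + lN + lQ) + δ - a) * (t - s k) - a * s k := by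
  rw [userCost, Finset.sum_update_sub, Function.update_self]
  ring

theorem userCost_eq_userCost_update_self (k : Fin n) (y : Fin n → ℝ) :
    userCost n s lN lQ φ δ a k y = userCost n s lN lQ φ δ a k (Function.update y k (y k)) := by
  rw [Function.update_eq_self]

theorem userCost_lt_update_of_add_sum_eq (hφ : 0 < φ) {k : Fin n} {y : Fin n → ℝ}
    (hy : (y k - s k) + ∑ j, (y j - s j) = φ⁻¹ * (a - δ) - lN - lQ) {t : ℝ} (ht : t ≠ y k) :
    userCost n s lN lQ φ δ a k y < userCost n s lN lQ φ δ a k (Function.update y k t) := by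
  rw [userCost_eq_userCost_update_self, userCost_update, userCost_update]
  refine sub_lt_sub_right (quadratic_lt_of_ne_vertex hφ ?_ (sub_left_injective.ne ht)) _
  linear_combination φ * hy + (a - δ) * mul_inv_cancel₀ hφ.ne'

theorem add_sum_eq_of_forall_userCost_le (hφ : φ ≠ 0) {k : Fin n} {y : Fin n → ℝ}
    (hy : ∀ t, userCost n s lN lQ φ δ a k y ≤ userCost n s lN lQ φ δ a k (Function.update y k t)) :
    (y k - s k) + ∑ j, (y j - s j) = φ⁻¹ * (a - δ) - lN - lQ := by
  have hvertex :
      2 * φ * (y k - s k) + (φ * (∑ j, (y j - s j) - (y k - s k) + lN + lQ) + δ - a) = 0 := by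
    refine quadratic_vertex_of_forall_le fun v => ?_
    have hv := hy (s k + v)
    rw [userCost_eq_userCost_update_self, userCost_update, userCost_update,
      add_sub_cancel_left] at hv
    linarith
  field_simp
  linear_combination hvertex

theorem eq_nashProfile_iff (y : Fin n → ℝ) :
    y = nashProfile n s lN lQ φ δ a ↔
      ∀ k, (y k - s k) + ∑ j, (y j - s j) = φ⁻¹ * (a - δ) - lN - lQ := by
  rw [add_sum_eq_iff_eq_const (fun k => y k - s k), Fintype.card_fin, funext_iff, funext_iff]
  simp only [nashProfile, sub_eq_iff_eq_add']

end

theorem nashProfile_unique_nash_equilibrium_general (n : ℕ) (s : Fin n → ℝ)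
    (lN lQ φ δ a : ℝ) (hφ : 0 < φ) :
    (∀ k : Fin n, ∀ t : ℝ, t ≠ nashProfile n s lN lQ φ δ a k →
        userCost n s lN lQ φ δ a k (nashProfile n s lN lQ φ δ a) <
        userCost n s lN lQ φ δ a k (Function.update (nashProfile n s lN lQ φ δ a) k t))
    ∧ ∀ y : Fin n → ℝ,
        (∀ k : Fin n, ∀ t : ℝ,
            userCost n s lN lQ φ δ a k y ≤
            userCost n s lN lQ φ δ a k (Function.update y k t)) →
        y = nashProfile n s lN lQ φ δ a := by
  refine ⟨fun k t ht => ?_, fun y hy => ?_⟩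
  · exact userCost_lt_update_of_add_sum_eq hφ ((eq_nashProfile_iff _).1 rfl k) ht
  · exact (eq_nashProfile_iff y).2 fun k => add_sum_eq_of_forall_userCost_le hφ.ne' (hy k)

/-- The profile `x̄_k = s_k + γ` is the unique Nash equilibrium of the
per-slot game with unconstrained strategies: every user's equilibrium strategy is a
strict best response (any unilateral deviation strictly increases their cost), and
no other profile has the best-response property. -/
theorem nashProfile_unique_nash_equilibrium (n : ℕ) (hn : 1 ≤ n) (s : Fin n → ℝ)
    (lN lQ φ δ a : ℝ) (hφ : 0 < φ) (hδ : 0 < δ) :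
    (∀ k : Fin n, ∀ t : ℝ, t ≠ nashProfile n s lN lQ φ δ a k →
        userCost n s lN lQ φ δ a k (nashProfile n s lN lQ φ δ a) <
        userCost n s lN lQ φ δ a k (Function.update (nashProfile n s lN lQ φ δ a) k t))
    ∧ ∀ y : Fin n → ℝ,
        (∀ k : Fin n, ∀ t : ℝ,
            userCost n s lN lQ φ δ a k y ≤
            userCost n s lN lQ φ δ a k (Function.update y k t)) →
        y = nashProfile n s lN lQ φ δ a :=
  nashProfile_unique_nash_equilibrium_general n s lN lQ φ δ a hφ
end

section
/- Substituting the Nash equilibrium strategies x̄_k = s_k + γ, with γ = (n+1)⁻¹(φ⁻¹(a − δ) − l_N − l_Q), into the per-slot CES revenue −a Σ_k x̄_k − p̄ l_Q (where p̄ is the corresponding equilibrium grid price) yields exactly λ₁ a² + λ₂ a + λ₃ l_Q² + λ₄ l_Q, where λ₁ = −n((n+1)φ)⁻¹, λ₂ = n(n+1)⁻¹(l_N + φ⁻¹δ) − Σ_k s_k, λ₃ = −φ(n+1)⁻¹, and λ₄ = −(n+1)⁻¹(φ l_N + δ); in particular all cross terms in a·l_Q cancel. -/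
/-! The key observation is that the equilibrium grid price falls short of the CES unit price by
exactly `φ γ`. Replacing `p̄` by `a - φ γ` turns the revenue into `-a Σ s - n a γ - a l_Q + φ γ l_Q`,
and the three `a l_Q` contributions `n/(n+1) - 1 + 1/(n+1)` cancel. -/

open Finset

section
variable {K : Type*} [Field K] {c φ γ δ lN lQ a : K}

theorem equilibrium_grid_price_eq_sub (hc : c + 1 ≠ 0) (hφ : φ ≠ 0)
    (hγ : γ = (c + 1)⁻¹ * (φ⁻¹ * (a - δ) - lN - lQ)) :
    φ * (c * γ + lN + lQ) + δ = a - φ * γ := by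
  subst hγ
  field_simp
  ring

theorem ces_revenue_eq_quadratic (hc : c + 1 ≠ 0) (hφ : φ ≠ 0)
    (hγ : γ = (c + 1)⁻¹ * (φ⁻¹ * (a - δ) - lN - lQ)) (S : K) :
    -a * (S + c * γ) - (φ * (c * γ + lN + lQ) + δ) * lQ
      = (-c * ((c + 1) * φ)⁻¹) * a ^ 2 + (c * (c + 1)⁻¹ * (lN + φ⁻¹ * δ) - S) * a
        + (-φ * (c + 1)⁻¹) * lQ ^ 2 + (-(c + 1)⁻¹ * (φ * lN + δ)) * lQ := by
  rw [equilibrium_grid_price_eq_sub hc hφ hγ, hγ]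
  field_simp
  ring

end

theorem ces_revenue_at_equilibrium_general (n : ℕ) (s : Fin n → ℝ)
    (lN lQ φ δ a : ℝ) (hφ : 0 < φ) :
    -a * (∑ k : Fin n, (s k + ((n : ℝ) + 1)⁻¹ * (φ⁻¹ * (a - δ) - lN - lQ)))
      - (φ * ((n : ℝ) * (((n : ℝ) + 1)⁻¹ * (φ⁻¹ * (a - δ) - lN - lQ)) + lN + lQ) + δ) * lQ
    = (-(n : ℝ) * (((n : ℝ) + 1) * φ)⁻¹) * a ^ 2
      + ((n : ℝ) * ((n : ℝ) + 1)⁻¹ * (lN + φ⁻¹ * δ) - ∑ k : Fin n, s k) * a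
      + (-φ * ((n : ℝ) + 1)⁻¹) * lQ ^ 2
      + (-((n : ℝ) + 1)⁻¹ * (φ * lN + δ)) * lQ := by
  set γ := ((n : ℝ) + 1)⁻¹ * (φ⁻¹ * (a - δ) - lN - lQ) with hγ
  rw [sum_add_distrib, sum_const, card_univ, Fintype.card_fin, nsmul_eq_mul]
  exact ces_revenue_eq_quadratic (by positivity) hφ.ne' hγ _

/-- Substituting the Nash equilibrium strategies `x̄_k = s_k + γ`,
`γ = (n+1)⁻¹ (φ⁻¹ (a − δ) − l_N − l_Q)`, into the per-slot CES revenue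
`−a Σ_k x̄_k − p̄ l_Q` (with `p̄ = φ (n γ + l_N + l_Q) + δ` the corresponding
equilibrium grid price) yields exactly `λ₁ a² + λ₂ a + λ₃ l_Q² + λ₄ l_Q`, where
`λ₁ = −n((n+1)φ)⁻¹`, `λ₂ = n(n+1)⁻¹(l_N + φ⁻¹ δ) − Σ_k s_k`,
`λ₃ = −φ(n+1)⁻¹`, `λ₄ = −(n+1)⁻¹(φ l_N + δ)`;
in particular all cross terms in `a · l_Q` cancel. -/
theorem ces_revenue_at_equilibrium (n : ℕ) (hn : 1 ≤ n) (s : Fin n → ℝ)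
    (lN lQ φ δ a : ℝ) (hφ : 0 < φ) (hδ : 0 < δ) :
    -a * (∑ k : Fin n, (s k + ((n : ℝ) + 1)⁻¹ * (φ⁻¹ * (a - δ) - lN - lQ)))
      - (φ * ((n : ℝ) * (((n : ℝ) + 1)⁻¹ * (φ⁻¹ * (a - δ) - lN - lQ)) + lN + lQ) + δ) * lQ
    = (-(n : ℝ) * (((n : ℝ) + 1) * φ)⁻¹) * a ^ 2
      + ((n : ℝ) * ((n : ℝ) + 1)⁻¹ * (lN + φ⁻¹ * δ) - ∑ k : Fin n, s k) * a
      + (-φ * ((n : ℝ) + 1)⁻¹) * lQ ^ 2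
      + (-((n : ℝ) + 1)⁻¹ * (φ * lN + δ)) * lQ :=
  ces_revenue_at_equilibrium_general n s lN lQ φ δ a hφ
end
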